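/- Let π = a_1a_2⋯a_n ∈ S_n be a separable permutation with a_1 < a_n. Then π = π_A π_B where, for some 1 ≤ m < n, π_A is a permutation of the letters {1,…,m} and π_B is a permutation of the letters {m+1,…,n}, and F(Λ_π, q) = F(Λ_{σ_A}, q) · F(Λ_{σ_B}, q), where σ_A ∈ S_m is π_A and σ_B ∈ S_{n−m} is obtained from π_B by subtracting m from each letter. -/

import Mathlib

/-!
Avoiding 2413 and having `π(1) < π(n)` forces `π` to be a direct sum `σ_A ⊕ σ_B`: if `p` is the
first position with `π(p) ≥ π(n)`, every entry before `p` is smaller than `π(n)`, and an inversion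
straddling `p` would complete a 2413 with the entries at `p` and `n`.

The lower interval of a direct sum is the product of those of its blocks. Since
`ℓ(u) + ℓ(w) = ℓ(uw) + 2 #{inversions of w that are not inversions of uw}`, `u ≤ π` forces every
inversion of `w = u⁻¹π` to be an inversion of `π`; hence `w`, and with it `u = π w⁻¹`, preserves
the blocks. Length is additive over the blocks, so `u ↦ (u_A, u_B)` matches both the weak orders
and the ranks.
-/

open Polynomial

namespace SepPerm

/-- The length (number of inversions) of a permutation of `Fin n`. -/
def invCount {n : ℕ} (π : Equiv.Perm (Fin n)) : ℕ :=
  (Finset.univ.filter fun p : Fin n × Fin n => p.1 < p.2 ∧ π p.2 < π p.1).card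

/-- The (right) weak Bruhat order: `u ≤ v` iff `ℓ(u) + ℓ(u⁻¹v) = ℓ(v)`. -/
def wle {n : ℕ} (u v : Equiv.Perm (Fin n)) : Prop :=
  invCount u + invCount (u⁻¹ * v) = invCount v

open scoped Classical in
/-- `F(Λ_π, q) = ∑_{u ≤ π} q^{ℓ(u)}`, rank generating function of `[id, π]`. -/
noncomputable def FLam {n : ℕ} (π : Equiv.Perm (Fin n)) : Polynomial ℤ :=
  ∑ u ∈ Finset.univ.filter (fun u => wle u π), X ^ invCount u

open scoped Classical in
/-- `F(V_π, q) = ∑_{v ≥ π} q^{ℓ(v) - ℓ(π)}`, rank generating function of `[π, w₀]`. -/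
noncomputable def FV {n : ℕ} (π : Equiv.Perm (Fin n)) : Polynomial ℤ :=
  ∑ v ∈ Finset.univ.filter (fun v => wle π v), X ^ (invCount v - invCount π)

/-- A permutation is separable iff it avoids the patterns 3142 and 2413. -/
def IsSeparable {n : ℕ} (π : Equiv.Perm (Fin n)) : Prop :=
  (¬ ∃ i j k h : Fin n, i < j ∧ j < k ∧ k < h ∧
      π j < π h ∧ π h < π i ∧ π i < π k) ∧
  (¬ ∃ i j k h : Fin n, i < j ∧ j < k ∧ k < h ∧
      π k < π i ∧ π i < π h ∧ π h < π j)

/-- The longest element `w₀ = n, n-1, …, 1`. -/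
def w0 (n : ℕ) : Equiv.Perm (Fin n) := Fin.revPerm

/-- The complement `π^c`, with `π^c(i) = n + 1 - π(i)` (one-indexed). -/
def compl {n : ℕ} (π : Equiv.Perm (Fin n)) : Equiv.Perm (Fin n) := w0 n * π

/-- `[k] = 1 + q + ⋯ + q^{k-1}`. -/
noncomputable def qnum (k : ℕ) : Polynomial ℤ := ∑ i ∈ Finset.range k, X ^ i

/-- `[N]! = [1][2]⋯[N]`. -/
noncomputable def qfact (N : ℕ) : Polynomial ℤ := ∏ k ∈ Finset.range N, qnum (k + 1)

/-- The inversion poset `P_π` on the letters: `x ≤_P y` iff `x ≤ y` and `π⁻¹x ≤ π⁻¹y`. -/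
def invLe {n : ℕ} (π : Equiv.Perm (Fin n)) (x y : Fin n) : Prop :=
  x ≤ y ∧ π⁻¹ x ≤ π⁻¹ y

/-- `σ` is a linear extension of the order `r`: whenever `i <_r j`, `i` precedes `j`
in the one-line notation of `σ` (i.e. the position `σ⁻¹ i` comes before `σ⁻¹ j`). -/
def IsLinExt {N : ℕ} (r : Fin N → Fin N → Prop) (σ : Equiv.Perm (Fin N)) : Prop :=
  ∀ i j, r i j → i ≠ j → σ.symm i < σ.symm j

open scoped Classical in
/-- `F(𝓛(P), q) = ∑_{σ ∈ 𝓛(P)} q^{ℓ(σ)}`, generating function of linear extensions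
by number of inversions. -/
noncomputable def FLin {N : ℕ} (r : Fin N → Fin N → Prop) : Polynomial ℤ :=
  ∑ σ ∈ Finset.univ.filter (fun σ => IsLinExt r σ), X ^ invCount σ

open Finset Equiv

section Inversions

variable {n : ℕ}

lemma invCount_eq_card_filter_comp (u w : Perm (Fin n)) :
    invCount u = #{p : Fin n × Fin n | w p.1 < w p.2 ∧ (u * w) p.2 < (u * w) p.1} :=
  card_equiv (Equiv.prodCongr w w).symm fun q => by
    simp only [mem_filter, mem_univ, true_and]
    simp

theorem invCount_add_invCount (u w : Perm (Fin n)) :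
    invCount u + invCount w = invCount (u * w) +
      2 * #{p : Fin n × Fin n | p.1 < p.2 ∧ w p.2 < w p.1 ∧ (u * w) p.1 < (u * w) p.2} := by
  have hswap : #{p : Fin n × Fin n | p.1 < p.2 ∧ w p.2 < w p.1 ∧ (u * w) p.1 < (u * w) p.2} =
      #{p : Fin n × Fin n | p.2 < p.1 ∧ w p.1 < w p.2 ∧ (u * w) p.2 < (u * w) p.1} :=
    card_equiv (Equiv.prodComm _ _) fun p => by
      simp only [mem_filter, mem_univ, true_and]
      simp
  -- After transporting the inversions of `u` along `w`, the pairs with `p.1 > p.2` are, swapped,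
  -- the pairs inverted by `w` and restored by `u * w`; the rest is a pairwise comparison.
  rw [invCount_eq_card_filter_comp u w, two_mul]
  nth_rewrite 2 [hswap]
  simp only [invCount, card_filter, ← sum_add_distrib]
  refine sum_congr rfl fun p _ => ?_
  have hw : w p.1 = w p.2 ↔ p.1 = p.2 := w.injective.eq_iff
  have hv : (u * w) p.1 = (u * w) p.2 ↔ p.1 = p.2 := (u * w).injective.eq_iff
  simp only [Fin.ext_iff, Fin.lt_def] at hw hv ⊢
  split_ifs <;> omega

lemma invCount_mul_le (u w : Perm (Fin n)) : invCount (u * w) ≤ invCount u + invCount w := by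
  have := invCount_add_invCount u w
  omega

lemma apply_lt_apply_of_wle {u v : Perm (Fin n)} (h : wle u v) {i j : Fin n} (hij : i < j)
    (hw : (u⁻¹ * v) j < (u⁻¹ * v) i) : v j < v i := by
  have key := invCount_add_invCount u (u⁻¹ * v)
  rw [mul_inv_cancel_left] at key
  have hempty : #{p : Fin n × Fin n | p.1 < p.2 ∧ (u⁻¹ * v) p.2 < (u⁻¹ * v) p.1 ∧
      v p.1 < v p.2} = 0 := by
    unfold wle at h
    omega
  rw [card_eq_zero, filter_eq_empty_iff] at hempty
  have hnot : ¬ v i < v j := fun hlt => hempty (mem_univ (i, j)) ⟨hij, hw, hlt⟩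
  exact lt_of_le_of_ne (not_lt.1 hnot) (v.injective.ne hij.ne')

lemma invCount_eq_sum (σ : Perm (Fin n)) :
    invCount σ = ∑ i, ∑ j, if i < j ∧ σ j < σ i then 1 else 0 := by
  rw [invCount, card_filter, ← Fintype.sum_prod_type']

end Inversions

section Blocks

variable {n m : ℕ}

lemma val_lt_iff_apply_val_lt_of_cut (hm : m ≤ n) {σ : Perm (Fin n)}
    (hcut : ∀ i j : Fin n, (i : ℕ) < m → m ≤ (j : ℕ) → σ i < σ j) (i : Fin n) :
    (i : ℕ) < m ↔ (σ i : ℕ) < m := by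
  have hlow : #{j : Fin n | (j : ℕ) < m} = m := by
    rw [Fin.card_filter_val_lt, min_eq_right hm]
  have hhigh : #{j : Fin n | ¬ (j : ℕ) < m} = n - m := by
    rw [filter_not, card_sdiff_of_subset (filter_subset _ _), hlow, card_univ, Fintype.card_fin]
  constructor
  · intro hi
    have := card_le_card_of_injOn σ (s := {j : Fin n | ¬ (j : ℕ) < m}) (t := Ioi (σ i))
      (fun j hj => mem_Ioi.2 (hcut i j hi (not_lt.1 (mem_filter.1 hj).2))) σ.injective.injOn
    rw [hhigh, Fin.card_Ioi] at this
    have := (σ i).isLt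
    omega
  · intro hσi
    by_contra hi
    have := card_le_card_of_injOn σ (s := {j : Fin n | (j : ℕ) < m}) (t := Iio (σ i))
      (fun j hj => mem_Iio.2 (hcut j i (mem_filter.1 hj).2 (not_lt.1 hi))) σ.injective.injOn
    rw [hlow, Fin.card_Iio] at this
    omega

variable (hm : m ≤ n)

def finSumFinSubEquiv : Fin m ⊕ Fin (n - m) ≃ Fin n :=
  finSumFinEquiv.trans (finCongr (Nat.add_sub_of_le hm))

@[simp]
lemma val_finSumFinSubEquiv_inl (i : Fin m) : (finSumFinSubEquiv hm (.inl i) : ℕ) = i := by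
  simp [finSumFinSubEquiv]

@[simp]
lemma val_finSumFinSubEquiv_inr (j : Fin (n - m)) :
    (finSumFinSubEquiv hm (.inr j) : ℕ) = m + j := by
  simp [finSumFinSubEquiv]

def permSum : Perm (Fin m) × Perm (Fin (n - m)) →* Perm (Fin n) :=
  (finSumFinSubEquiv hm).permCongrHom.toMonoidHom.comp (Perm.sumCongrHom _ _)

lemma permSum_injective : Function.Injective (permSum hm) :=
  (finSumFinSubEquiv hm).permCongrHom.injective.comp Perm.sumCongrHom_injective

@[simp]
lemma permSum_apply_inl (p : Perm (Fin m) × Perm (Fin (n - m))) (i : Fin m) :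
    permSum hm p (finSumFinSubEquiv hm (.inl i)) = finSumFinSubEquiv hm (.inl (p.1 i)) := by
  simp [permSum]

@[simp]
lemma permSum_apply_inr (p : Perm (Fin m) × Perm (Fin (n - m))) (j : Fin (n - m)) :
    permSum hm p (finSumFinSubEquiv hm (.inr j)) = finSumFinSubEquiv hm (.inr (p.2 j)) := by
  simp [permSum]

lemma val_permSum_apply_of_lt (p : Perm (Fin m) × Perm (Fin (n - m))) (i : Fin m)
    (hi : (i : ℕ) < n) : (permSum hm p ⟨i, hi⟩ : ℕ) = p.1 i := by
  have : (⟨i, hi⟩ : Fin n) = finSumFinSubEquiv hm (.inl i) := Fin.ext (by simp)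
  simp [this]

lemma val_permSum_apply_add (p : Perm (Fin m) × Perm (Fin (n - m))) (j : Fin (n - m))
    (hj : m + j < n) : (permSum hm p ⟨m + j, hj⟩ : ℕ) = m + p.2 j := by
  have : (⟨m + j, hj⟩ : Fin n) = finSumFinSubEquiv hm (.inr j) := Fin.ext (by simp)
  simp [this]

lemma invCount_permSum (p : Perm (Fin m) × Perm (Fin (n - m))) :
    invCount (permSum hm p) = invCount p.1 + invCount p.2 := by
  set e := finSumFinSubEquiv hm
  have hll (i i' : Fin m) : e (.inl i) < e (.inl i') ↔ i < i' := by
    simp only [Fin.lt_def, e, val_finSumFinSubEquiv_inl]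
  have hrr (j j' : Fin (n - m)) : e (.inr j) < e (.inr j') ↔ j < j' := by
    simp only [Fin.lt_def, e, val_finSumFinSubEquiv_inr, Nat.add_lt_add_iff_left]
  have hlr (i : Fin m) (j : Fin (n - m)) : e (.inl i) < e (.inr j) := by
    simp only [Fin.lt_def, e, val_finSumFinSubEquiv_inl, val_finSumFinSubEquiv_inr]
    omega
  have hrl (i : Fin m) (j : Fin (n - m)) : ¬ e (.inr j) < e (.inl i) := (hlr i j).asymm
  rw [invCount_eq_sum, invCount_eq_sum, invCount_eq_sum]
  simp only [← e.sum_comp, Fintype.sum_sum_type, permSum_apply_inl, permSum_apply_inr, e,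
    hll, hrr, hlr, hrl, false_and, and_false, if_false, sum_const_zero, add_zero,
    zero_add]

lemma mem_range_permSum_iff {σ : Perm (Fin n)} :
    σ ∈ (permSum hm).range ↔ ∀ i : Fin n, (i : ℕ) < m ↔ (σ i : ℕ) < m := by
  set e := finSumFinSubEquiv hm
  constructor
  · rintro ⟨p, rfl⟩ x
    obtain ⟨y | y, rfl⟩ := e.surjective x <;> simp [e]
  · intro h
    obtain ⟨p, hp⟩ := Perm.mem_sumCongrHom_range_of_perm_mapsTo_inl
      (σ := e.symm.permCongr σ) <| by
        rintro _ ⟨i, rfl⟩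
        obtain ⟨y | y, hy⟩ := e.surjective (σ (e (.inl i)))
        · exact ⟨y, by simp [← hy]⟩
        · have := (h (e (.inl i))).1 (by simp [e])
          simp [← hy, e] at this
    refine ⟨p, ?_⟩
    ext x
    simp [permSum, hp, e]

lemma mem_range_permSum_of_wle {u π : Perm (Fin n)} (h : wle u π)
    (hπ : π ∈ (permSum hm).range) : u ∈ (permSum hm).range := by
  have hblock := (mem_range_permSum_iff hm).1 hπ
  have hw : u⁻¹ * π ∈ (permSum hm).range := by
    refine (mem_range_permSum_iff hm).2 (val_lt_iff_apply_val_lt_of_cut hm fun i j hi hj => ?_)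
    have hij : i < j := Fin.lt_def.2 (by omega)
    refine lt_of_le_of_ne (not_lt.1 fun hji => ?_) ((u⁻¹ * π).injective.ne hij.ne)
    have hπji := apply_lt_apply_of_wle h hij hji
    have := (hblock i).1 hi
    have := (hblock j).not.1 (by omega)
    rw [Fin.lt_def] at hπji
    omega
  simpa using mul_mem hπ (inv_mem hw)

lemma wle_permSum_iff (p q : Perm (Fin m) × Perm (Fin (n - m))) :
    wle (permSum hm p) (permSum hm q) ↔ wle p.1 q.1 ∧ wle p.2 q.2 := by
  have h₁ := invCount_mul_le p.1 (p.1⁻¹ * q.1)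
  have h₂ := invCount_mul_le p.2 (p.2⁻¹ * q.2)
  rw [mul_inv_cancel_left] at h₁ h₂
  simp only [wle, ← map_inv, ← map_mul, invCount_permSum, Prod.fst_mul, Prod.snd_mul,
    Prod.fst_inv, Prod.snd_inv]
  omega

theorem FLam_permSum (p : Perm (Fin m) × Perm (Fin (n - m))) :
    FLam (permSum hm p) = FLam p.1 * FLam p.2 := by
  classical
  simp only [FLam, sum_mul_sum, ← sum_product', ← pow_add]
  symm
  refine sum_bij (fun q _ => permSum hm q) ?_ (fun q _ q' _ h => permSum_injective hm h) ?_ ?_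
  · intro q hq
    simpa [wle_permSum_iff] using hq
  · intro u hu
    obtain ⟨q, rfl⟩ := mem_range_permSum_of_wle hm (mem_filter.1 hu).2 ⟨p, rfl⟩
    exact ⟨q, by simpa [wle_permSum_iff] using hu, rfl⟩
  · intro q _
    rw [invCount_permSum]

end Blocks

lemma exists_cut_of_avoids_2413 {n : ℕ} {π : Perm (Fin n)}
    (h2413 : ¬ ∃ i j k h : Fin n, i < j ∧ j < k ∧ k < h ∧ π k < π i ∧ π i < π h ∧ π h < π j)
    (hn : 0 < n) (hfl : π ⟨0, hn⟩ < π ⟨n - 1, Nat.sub_lt hn one_pos⟩) :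
    ∃ m, 1 ≤ m ∧ m < n ∧ ∀ i j : Fin n, (i : ℕ) < m → m ≤ (j : ℕ) → π i < π j := by
  classical
  set l : Fin n := ⟨n - 1, Nat.sub_lt hn one_pos⟩
  have hl (k : Fin n) : k ≤ l := Fin.le_def.2 (by simp only [l]; omega)
  have hne : (univ.filter fun x => π l ≤ π x).Nonempty := ⟨l, by simp⟩
  obtain ⟨p, hp, hmin⟩ : ∃ p, π l ≤ π p ∧ ∀ x, π l ≤ π x → p ≤ x :=
    ⟨_, (mem_filter.1 (min'_mem _ hne)).2, fun x hx => min'_le _ x (by simp [hx])⟩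
  have hp0 : (p : ℕ) ≠ 0 := fun h0 => by
    rw [show p = ⟨0, hn⟩ from Fin.ext h0] at hp
    exact hp.not_gt hfl
  refine ⟨p, Nat.one_le_iff_ne_zero.2 hp0, p.isLt, fun i j hi hj => ?_⟩
  have hil : π i < π l := not_le.1 fun h => (hmin i h).not_gt (Fin.lt_def.2 hi)
  rcases (Fin.le_def.2 hj).eq_or_lt with rfl | hpj
  · exact hil.trans_le hp
  have hij : i < j := (Fin.lt_def.2 hi).trans hpj
  -- an inversion `(i, j)` straddling `p` would complete the pattern 2413 with `p` and `l`
  refine lt_of_le_of_ne (not_lt.1 fun hji => h2413 ⟨i, p, j, l, Fin.lt_def.2 hi, hpj, ?_, hji,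
    hil, ?_⟩) (π.injective.ne hij.ne)
  · exact (hl j).lt_of_ne (by rintro rfl; exact (hji.trans hil).false)
  · exact hp.lt_of_ne fun h => (hpj.trans_le (hl j)).ne (π.injective h).symm

/-- If `π ∈ S_n` is separable with `a_1 < a_n`, then `π` is the
concatenation of a block `π_A` on the letters `{1,…,m}` and a block `π_B` on the
letters `{m+1,…,n}` (0-indexed below; `σA`, `σB` are the renormalized blocks), and
`F(Λ_π, q) = F(Λ_{σ_A}, q) · F(Λ_{σ_B}, q)`. -/
theorem FLam_eq_mul_of_first_lt_last (n : ℕ) (hn : 0 < n) (π : Equiv.Perm (Fin n))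
    (hsep : IsSeparable π) (hfl : π ⟨0, hn⟩ < π ⟨n - 1, by omega⟩) :
    ∃ m : ℕ, ∃ _h1 : 1 ≤ m, ∃ hmn : m < n,
      (∀ i : Fin n, (i : ℕ) < m ↔ (π i : ℕ) < m) ∧
      ∃ σA : Equiv.Perm (Fin m), ∃ σB : Equiv.Perm (Fin (n - m)),
        (∀ i : Fin m, (σA i : ℕ) = (π ⟨i, i.2.trans hmn⟩ : ℕ)) ∧
        (∀ i : Fin (n - m),
          (σB i : ℕ) + m = (π ⟨m + i, by have := i.2; omega⟩ : ℕ)) ∧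
        FLam π = FLam σA * FLam σB := by
  obtain ⟨m, hm1, hmn, hcut⟩ := exists_cut_of_avoids_2413 hsep.2 hn hfl
  have hblock := val_lt_iff_apply_val_lt_of_cut hmn.le hcut
  obtain ⟨p, rfl⟩ := (mem_range_permSum_iff hmn.le).2 hblock
  refine ⟨m, hm1, hmn, hblock, p.1, p.2, fun i => (val_permSum_apply_of_lt hmn.le p i _).symm,
    fun j => ?_, FLam_permSum hmn.le p⟩
  rw [val_permSum_apply_add, add_comm]

end SepPerm
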